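/- Let k be an even integer. Then the union over all (usual) primes p of the sets S_k(p,0) = { n ⊙_k p : n ∈ ℤ } equals ℤ \ {-1, 1}. -/

import Mathlib

def odot (k m n : ℤ) : ℤ := (m - n + 1) * n + n * (n - 1) * k / 2

/-! For even `k` the `k`-arithmetic product factors as `m ⊙_k n = (m - n + 1 + (n - 1) k/2) · n`,
and the first factor takes every integer value as `m` varies, so `S_k(p, 0) = pℤ`. The union of
`pℤ` over primes `p` consists of the integers with a prime divisor, i.e. all `x` with `|x| ≠ 1`. -/

theorem odot_eq_mul_of_even {k : ℤ} (hk : Even k) (m n : ℤ) :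
    odot k m n = (m - n + 1 + (n - 1) * (k / 2)) * n := by
  obtain ⟨j, rfl⟩ := hk
  have hj : (j + j) / 2 = j := by omega
  have : n * (n - 1) * (j + j) = 2 * (n * (n - 1) * j) := by ring
  rw [odot, this, Int.mul_ediv_cancel_left _ two_ne_zero, hj]
  ring

theorem exists_odot_eq_iff_dvd {k : ℤ} (hk : Even k) (p x : ℤ) :
    (∃ m, odot k m p = x) ↔ p ∣ x := by
  simp only [odot_eq_mul_of_even hk]
  constructor
  · rintro ⟨m, rfl⟩
    exact dvd_mul_left _ _
  · rintro ⟨c, rfl⟩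
    exact ⟨c + p - 1 - (p - 1) * (k / 2), by ring⟩

theorem Int.exists_nat_prime_dvd_iff (x : ℤ) :
    (∃ p : ℕ, p.Prime ∧ (p : ℤ) ∣ x) ↔ x.natAbs ≠ 1 := by
  simp only [Int.natCast_dvd]
  constructor
  · rintro ⟨p, hp, hdvd⟩ hx
    exact hp.not_dvd_one (hx ▸ hdvd)
  · exact Nat.exists_prime_and_dvd

theorem stmt_12 (k : ℤ) (hk : Even k) :
    {x : ℤ | ∃ p : ℕ, p.Prime ∧ ∃ n : ℤ, odot k n (p : ℤ) = x} =
      {x : ℤ | x ≠ -1 ∧ x ≠ 1} := by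
  ext x
  simp only [Set.mem_ofPred_eq, exists_odot_eq_iff_dvd hk, Int.exists_nat_prime_dvd_iff]
  omega
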